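/- arXiv:1908.07015 — 4 statements merged into one kernel-verified Lean document; each statement's English description precedes it below -/
import Mathlib

section
/- Every finite COTS C = {c_0, ..., c_n} (with consecutive points adjacent) admits a continuous surjection f from the real interval [0,1] onto C, i.e., a parameterization of the COTS by [0,1]. -/
open Set

/-- The minimal open neighborhood of a point in a topological space. -/
def minOpenNhd {X : Type*} (t : TopologicalSpace X) (x : X) : Set X :=
  ⋂₀ {U : Set X | t.IsOpen U ∧ x ∈ U}

/-- The specialization-style preorder: `x ≤ y` iff `U_x ⊆ U_y`. -/
def specLE {X : Type*} (t : TopologicalSpace X) (x y : X) : Prop :=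
  minOpenNhd t x ⊆ minOpenNhd t y

/-- Two points are adjacent if distinct and comparable in the specialization order. -/
def Adjacent {X : Type*} (t : TopologicalSpace X) (x y : X) : Prop :=
  x ≠ y ∧ (specLE t x y ∨ specLE t y x)

/-- The adjacency set of a point. -/
def adjSet {X : Type*} (t : TopologicalSpace X) (x : X) : Set X := {y | Adjacent t x y}

/-- A COTS: a connected space in which every 3-point subset has a point separating
the other two. -/
def IsCOTS {X : Type*} (t : TopologicalSpace X) : Prop :=
  @ConnectedSpace X t ∧
    ∀ Y : Set X, Y.ncard = 3 →
      ∃ y ∈ Y, ∃ a ∈ Y \ {y}, ∃ b ∈ Y \ {y},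
        @connectedComponentIn X t {y}ᶜ a ≠ @connectedComponentIn X t {y}ᶜ b

/-- An endpoint of a COTS: a point with at most one neighbor. -/
def IsEndpoint {X : Type*} (t : TopologicalSpace X) (x : X) : Prop :=
  (adjSet t x).ncard ≤ 1

/-- A COTS-path: the continuous image of a finite COTS. -/
def IsCOTSPath {Y : Type*} (tY : TopologicalSpace Y) (P : Set Y) : Prop :=
  ∃ (C : Type) (tC : TopologicalSpace C), Finite C ∧ IsCOTS tC ∧
    ∃ f : C → Y, @Continuous C Y tC tY f ∧ Set.range f = P

/-- A COTS-path with prescribed start and end points. -/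
def IsCOTSPathFromTo {Y : Type*} (tY : TopologicalSpace Y) (P : Set Y) (a b : Y) : Prop :=
  ∃ (C : Type) (tC : TopologicalSpace C), Finite C ∧ IsCOTS tC ∧
    ∃ f : C → Y, @Continuous C Y tC tY f ∧ Set.range f = P ∧
      ∃ c₀ c₁ : C, IsEndpoint tC c₀ ∧ IsEndpoint tC c₁ ∧ f c₀ = a ∧ f c₁ = b

/-- A COTS-arc: the homeomorphic image of a finite COTS. -/
def IsCOTSArc {Y : Type*} (tY : TopologicalSpace Y) (A : Set Y) : Prop :=
  ∃ (C : Type) (tC : TopologicalSpace C), Finite C ∧ IsCOTS tC ∧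
    ∃ f : C → Y, @Topology.IsEmbedding C Y tC tY f ∧ Set.range f = A

/-- A COTS-arc with prescribed endpoints. -/
def IsCOTSArcFromTo {Y : Type*} (tY : TopologicalSpace Y) (A : Set Y) (a b : Y) : Prop :=
  ∃ (C : Type) (tC : TopologicalSpace C), Finite C ∧ IsCOTS tC ∧
    ∃ f : C → Y, @Topology.IsEmbedding C Y tC tY f ∧ Set.range f = A ∧
      ∃ c₀ c₁ : C, IsEndpoint tC c₀ ∧ IsEndpoint tC c₁ ∧ f c₀ = a ∧ f c₁ = b

/-- The COTS-distance: one less than the minimal cardinality of a COTS-arc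
joining two points (`⊤` if there is no such arc). -/
noncomputable def cotsDist {X : Type*} (t : TopologicalSpace X) (x y : X) : ℕ∞ :=
  sInf {n : ℕ∞ | ∃ A : Set X, IsCOTSArcFromTo t A x y ∧ (A.ncard : ℕ∞) = n + 1}

/-- The Khalimsky topology on ℤ. -/
def khal : TopologicalSpace ℤ :=
  TopologicalSpace.generateFrom
    {s : Set ℤ | ∃ n : ℤ, (Odd n ∧ s = {n}) ∨ (Even n ∧ s = {n - 1, n, n + 1})}

/-- The Khalimsky plane topology on ℤ × ℤ. -/
def khalPlane : TopologicalSpace (ℤ × ℤ) := @instTopologicalSpaceProd ℤ ℤ khal khal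

/-- A point of the Khalimsky plane is pure if its coordinates have the same parity. -/
def IsPurePt (p : ℤ × ℤ) : Prop := (Even p.1 ∧ Even p.2) ∨ (Odd p.1 ∧ Odd p.2)

/-- A digital Jordan curve: a finite set of at least 4 points such that removing
any point leaves a COTS-arc. -/
def IsJordanCurve {X : Type*} (t : TopologicalSpace X) (J : Set X) : Prop :=
  J.Finite ∧ 4 ≤ J.ncard ∧ ∀ j ∈ J, IsCOTSArc t (J \ {j})

/-- The interior of a digital Jordan curve in the Khalimsky plane: the union of the
finite (bounded) connected components of its complement. -/
def jInterior (J : Set (ℤ × ℤ)) : Set (ℤ × ℤ) :=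
  ⋃₀ {S | ∃ p ∉ J, S = @connectedComponentIn _ khalPlane Jᶜ p ∧ S.Finite}

theorem finite_pathConnected_aux {X : Type*} [t : TopologicalSpace X] [Finite X]
    [ConnectedSpace X] : PathConnectedSpace X := by
  have hopen : ∀ x : X, IsOpen (pathComponent x) := by
    intro x
    rw [isOpen_iff_mem_nhds]
    intro z hz
    have hmin : IsOpen (⋂₀ {U : Set X | IsOpen U ∧ z ∈ U}) :=
      Set.Finite.isOpen_sInter (Set.toFinite _) (fun U hU => hU.1)
    refine Filter.mem_of_superset (hmin.mem_nhds fun U hU => hU.2) ?_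
    intro y hy
    have hspec : y ⤳ z := by
      rw [specializes_iff_forall_open]
      exact fun s hs hzs => hy s ⟨hs, hzs⟩
    exact hz.trans (hspec.joinedIn (mem_univ _) (mem_univ _)).joined.symm
  have hclopen : ∀ x : X, IsClopen (pathComponent x) := by
    intro x
    refine ⟨isOpen_compl_iff.mp ?_, hopen x⟩
    have : (pathComponent x)ᶜ = ⋃ z ∈ (pathComponent x)ᶜ, pathComponent z := by
      ext y
      simp only [mem_iUnion, mem_compl_iff]
      constructor
      · intro hy; exact ⟨y, hy, mem_pathComponent_self y⟩
      · rintro ⟨z, hz, hyz⟩ hxy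
        exact hz (hxy.trans hyz.symm)
    rw [this]
    exact isOpen_biUnion fun z _ => hopen z
  constructor
  · infer_instance
  · intro x y
    have := (hclopen x).eq_univ ⟨x, mem_pathComponent_self x⟩
    rw [← mem_pathComponent_iff, this]; trivial

/-- Every finite COTS admits a parameterization by the unit interval: a continuous
surjection from `[0,1]` onto the COTS. -/
theorem stmt3 {X : Type*} [t : TopologicalSpace X] [Finite X] (h : IsCOTS t) :
    ∃ f : unitInterval → X, Continuous f ∧ Function.Surjective f := by
  have hconn : ConnectedSpace X := h.1
  have : PathConnectedSpace X := finite_pathConnected_aux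
  have hne : Nonempty X := inferInstance
  obtain ⟨n, ⟨e⟩⟩ := Finite.exists_equiv_fin X
  rcases n with _ | n
  · exact (e hne.some).elim0
  obtain ⟨γ, hγ⟩ := PathConnectedSpace.exists_path_through_family (fun i : Fin (n+1) => e.symm i)
  refine ⟨γ, γ.continuous, fun x => ?_⟩
  have := hγ (e x)
  simpa using this
end

section
/- If α and β are COTS-paths in a topological space Y such that the end point of α equals the start point of β, then the union α ∪ β is again a COTS-path in Y. -/
open Set

/-!
A finite space is Alexandrov discrete, so in a finite connected space any two points are joined
by a chain whose consecutive points are comparable for specialization, and concatenating such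
chains gives one chain through every point. Laying a chain out on a Khalimsky interval, its points
at the closed even integers and each open odd integer sent to the more generic of its two
neighbours, gives a continuous surjection from a finite COTS. So every finite connected subset of
`Y` is a COTS-path, and `α ∪ β` is a finite connected set because `α` and `β` meet in `b`.
-/

open Set Relation Topology

lemma khal_isOpen_iff {U : Set ℤ} :
    IsOpen[khal] U ↔ ∀ n ∈ U, Even n → n - 1 ∈ U ∧ n + 1 ∈ U := by
  let := khal
  constructor
  · intro hU
    induction hU with
    | basic s hs =>
      obtain ⟨m, ⟨hm, rfl⟩ | ⟨hm, rfl⟩⟩ := hs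
      · rintro n rfl hn
        exact absurd hm (Int.not_odd_iff_even.mpr hn)
      · rintro n hn hev
        simp only [mem_insert_iff, mem_singleton_iff] at hn ⊢
        rw [Int.even_iff] at hev hm
        omega
    | univ => simp
    | inter s t _ _ ihs iht =>
      exact fun n hn hev => ⟨⟨(ihs n hn.1 hev).1, (iht n hn.2 hev).1⟩,
        ⟨(ihs n hn.1 hev).2, (iht n hn.2 hev).2⟩⟩
    | sUnion S _ ih =>
      rintro n ⟨s, hs, hns⟩ hev
      exact ⟨⟨s, hs, (ih s hs n hns hev).1⟩, ⟨s, hs, (ih s hs n hns hev).2⟩⟩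
  · intro hU
    refine isOpen_iff_forall_mem_open.mpr fun n hn => ?_
    rcases Int.even_or_odd n with hev | hodd
    · refine ⟨{n - 1, n, n + 1}, ?_, .basic _ ⟨n, .inr ⟨hev, rfl⟩⟩, by simp⟩
      simp [insert_subset_iff, hn, hU n hn hev]
    · exact ⟨{n}, by simpa, .basic _ ⟨n, .inl ⟨hodd, rfl⟩⟩, rfl⟩

lemma khal_specializes_of_odd {m n : ℤ} (hm : Odd m) (hn : n ∈ Icc (m - 1) (m + 1)) :
    @Specializes ℤ khal m n := by
  let := khal
  refine specializes_iff_forall_open.mpr fun U hU hnU => ?_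
  obtain ⟨k, rfl⟩ := hm
  rcases eq_or_ne n (2 * k + 1) with rfl | hne
  · exact hnU
  · have hev : Even n := Int.even_iff.mpr (by simp only [mem_Icc] at hn; omega)
    have hnbrs := khal_isOpen_iff.mp hU n hnU hev
    rcases (show n = 2 * k + 1 + 1 ∨ n = 2 * k + 1 - 1 by simp only [mem_Icc] at hn; omega)
      with rfl | rfl
    · simpa using hnbrs.1
    · simpa using hnbrs.2

lemma khal_isPreconnected_Icc {a b : ℤ} (hab : a ≤ b) : @IsPreconnected ℤ khal (Icc a b) := by
  let := khal
  induction b, hab using Int.leInduction with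
  | base => simpa using isPreconnected_singleton
  | succ b hab ih =>
    obtain ⟨c, hc, hcodd⟩ : ∃ c ∈ Icc b (b + 1), Odd c := by
      rcases Int.even_or_odd b with hb | hb
      · exact ⟨b + 1, by simp, hb.add_one⟩
      · exact ⟨b, by simp, hb⟩
    have hstep : IsPreconnected (Icc b (b + 1)) :=
      isPreconnected_singleton.subset_closure (singleton_subset_iff.mpr hc) fun m hm =>
        specializes_iff_mem_closure.mp <| khal_specializes_of_odd hcodd (by
          simp only [mem_Icc] at hm hc ⊢; omega)
    rw [← Icc_union_Icc_eq_Icc hab (le_add_of_nonneg_right zero_le_one)]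
    exact ih.union b (by simp [hab]) (by simp) hstep

lemma ordConnected_of_khal_isPreconnected {S : Set ℤ} (hS : @IsPreconnected ℤ khal S) :
    S.OrdConnected := by
  let := khal
  refine ⟨fun x hx z hz y hy => ?_⟩
  by_contra hyS
  have hxy : x < y := lt_of_le_of_ne hy.1 (by rintro rfl; exact hyS hx)
  have hyz : y < z := lt_of_le_of_ne hy.2 (by rintro rfl; exact hyS hz)
  -- Cut at `y`; when `y` is odd the open singleton `{y}` is shared by both halves.
  let U := {n : ℤ | n < y + y % 2}
  let V := {n : ℤ | y - y % 2 < n}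
  have hU : IsOpen U := khal_isOpen_iff.mpr fun n hn hev => by
    simp only [U, mem_ofPred_eq, Int.even_iff] at hn hev ⊢; omega
  have hV : IsOpen V := khal_isOpen_iff.mpr fun n hn hev => by
    simp only [V, mem_ofPred_eq, Int.even_iff] at hn hev ⊢; omega
  have hcover : S ⊆ U ∪ V := fun n hn => by
    have : n ≠ y := by rintro rfl; exact hyS hn
    simp only [U, V, mem_union, mem_ofPred_eq]; omega
  obtain ⟨t, htS, htU, htV⟩ := hS U V hU hV hcover ⟨x, hx, by simp only [U, mem_ofPred_eq]; omega⟩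
    ⟨z, hz, by simp only [V, mem_ofPred_eq]; omega⟩
  have hty : t = y := by simp only [U, V, mem_ofPred_eq] at htU htV; omega
  exact hyS (hty ▸ htS)

lemma khal_Icc_connectedComponentIn_ne {a b : ℤ} {x y z : Icc a b} (hxy : (x : ℤ) < y)
    (hyz : (y : ℤ) < z) :
    @connectedComponentIn _ (khal.induced (↑)) {y}ᶜ x ≠
      @connectedComponentIn _ (khal.induced (↑)) {y}ᶜ z := by
  let := khal
  intro heq
  have hx : x ∈ ({y}ᶜ : Set (Icc a b)) := fun h => hxy.ne (congrArg Subtype.val h)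
  have hz : z ∈ ({y}ᶜ : Set (Icc a b)) := fun h => hyz.ne' (congrArg Subtype.val h)
  have hK : (Subtype.val '' connectedComponentIn {y}ᶜ x).OrdConnected :=
    ordConnected_of_khal_isPreconnected
      (isPreconnected_connectedComponentIn.image _ continuous_subtype_val.continuousOn)
  obtain ⟨t, htK, hty⟩ := hK.out (mem_image_of_mem _ (mem_connectedComponentIn hx))
    (mem_image_of_mem _ (heq ▸ mem_connectedComponentIn hz)) ⟨hxy.le, hyz.le⟩
  exact connectedComponentIn_subset _ _ htK (Subtype.ext hty)

lemma isCOTS_khal_Icc {a b : ℤ} (hab : a ≤ b) : IsCOTS (khal.induced ((↑) : Icc a b → ℤ)) := by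
  let := khal
  refine ⟨Subtype.connectedSpace ⟨nonempty_Icc.mpr hab, khal_isPreconnected_Icc hab⟩,
    fun S hS => ?_⟩
  obtain ⟨p, q, r, hpq, hpr, hqr, rfl⟩ := ncard_eq_three.mp hS
  set T : Set (Icc a b) := {p, q, r}
  have separates : ∀ x y z, x ∈ T → y ∈ T → z ∈ T →
      ((x : ℤ) < y ∧ (y : ℤ) < z ∨ (z : ℤ) < y ∧ (y : ℤ) < x) →
      ∃ y ∈ T, ∃ u ∈ T \ {y}, ∃ v ∈ T \ {y},
        connectedComponentIn {y}ᶜ u ≠ connectedComponentIn {y}ᶜ v := by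
    rintro x y z hx hy hz (⟨hxy, hyz⟩ | ⟨hzy, hyx⟩)
    · exact ⟨y, hy, x, ⟨hx, fun h => hxy.ne (congrArg Subtype.val h)⟩,
        z, ⟨hz, fun h => hyz.ne' (congrArg Subtype.val h)⟩,
        khal_Icc_connectedComponentIn_ne hxy hyz⟩
    · exact ⟨y, hy, x, ⟨hx, fun h => hyx.ne' (congrArg Subtype.val h)⟩,
        z, ⟨hz, fun h => hzy.ne (congrArg Subtype.val h)⟩,
        (khal_Icc_connectedComponentIn_ne hzy hyx).symm⟩
  have hpq' := Subtype.val_injective.ne hpq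
  have hpr' := Subtype.val_injective.ne hpr
  have hqr' := Subtype.val_injective.ne hqr
  have hmem : p ∈ T ∧ q ∈ T ∧ r ∈ T := by simp [T]
  obtain h | h | h : ((q : ℤ) < p ∧ (p : ℤ) < r ∨ (r : ℤ) < p ∧ (p : ℤ) < q) ∨
      ((p : ℤ) < q ∧ (q : ℤ) < r ∨ (r : ℤ) < q ∧ (q : ℤ) < p) ∨
      ((p : ℤ) < r ∧ (r : ℤ) < q ∨ (q : ℤ) < r ∧ (r : ℤ) < p) := by omega
  · exact separates q p r hmem.2.1 hmem.1 hmem.2.2 h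
  · exact separates p q r hmem.1 hmem.2.1 hmem.2.2 h
  · exact separates p r q hmem.1 hmem.2.2 hmem.2.1 h

lemma continuous_khal_Icc {Y : Type*} [TopologicalSpace Y] {a b : ℤ} (ha : Even a) (hb : Even b)
    (w : ℤ → Y) (hw : ∀ m ∈ Icc a b, Odd m → w m ⤳ w (m - 1) ∧ w m ⤳ w (m + 1)) :
    Continuous[khal.induced ((↑) : Icc a b → ℤ), _] fun t => w t := by
  let := khal
  refine continuous_def.mpr fun V hV => isOpen_induced_iff.mpr ⟨{n | n ∈ Icc a b → w n ∈ V}, ?_,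
    by ext t; simp [t.2.1, t.2.2]⟩
  refine khal_isOpen_iff.mpr fun n hn hev => ?_
  have hnI : ∀ m ∈ Icc a b, (m = n - 1 ∨ m = n + 1) → n ∈ Icc a b := by
    rw [Int.even_iff] at ha hb hev
    intro m hm hmn
    simp only [mem_Icc] at hm ⊢
    omega
  refine ⟨fun hn' => ?_, fun hn' => ?_⟩
  · have hspec := (hw _ hn' (hev.sub_odd odd_one)).2
    rw [sub_add_cancel] at hspec
    exact hspec.mem_open hV (hn (hnI _ hn' (.inl rfl)))
  · have hspec := (hw _ hn' hev.add_one).1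
    rw [add_sub_cancel_right] at hspec
    exact hspec.mem_open hV (hn (hnI _ hn' (.inr rfl)))

section Chains

variable {Y : Type*} [TopologicalSpace Y]

/-- Even points of the Khalimsky interval `[0, 2N]` trace `s`; the open odd point `2i + 1` goes to
whichever of `s i`, `s (i + 1)` specializes to the other. -/
lemma isCOTSPath_image_Icc (s : ℤ → Y) {N : ℤ} (hN : 0 ≤ N)
    (hs : ∀ i ∈ Ico 0 N, SymmGen (· ⤳ ·) (s i) (s (i + 1))) :
    IsCOTSPath ‹_› (s '' Icc 0 N) := by
  classical
  let w : ℤ → Y := fun n => if Even n then s (n / 2)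
    else if s (n / 2) ⤳ s (n / 2 + 1) then s (n / 2) else s (n / 2 + 1)
  have hw_even (i : ℤ) : w (2 * i) = s i := by simp [w]
  have hw_odd (i : ℤ) : w (2 * i + 1) = if s i ⤳ s (i + 1) then s i else s (i + 1) := by
    have h2 : (2 * i + 1) / 2 = i := by omega
    simp [w, h2]
  refine ⟨Icc 0 (2 * N), khal.induced (↑), (finite_Icc _ _).to_subtype,
    isCOTS_khal_Icc (by omega), fun t => w t,
    continuous_khal_Icc .zero (even_two_mul N) w ?_, ?_⟩
  · rintro m hm ⟨i, rfl⟩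
    have hi : i ∈ Ico 0 N := by simp only [mem_Icc, mem_Ico] at hm ⊢; omega
    rw [hw_odd, add_sub_cancel_right, hw_even, show 2 * i + 1 + 1 = 2 * (i + 1) by ring,
      hw_even]
    by_cases h : s i ⤳ s (i + 1)
    · simpa [h] using specializes_rfl
    · simpa [h] using ⟨(hs i hi).resolve_left h, specializes_rfl⟩
  · ext y
    constructor
    · rintro ⟨⟨n, hn⟩, rfl⟩
      simp only [mem_Icc] at hn
      obtain ⟨i, rfl | rfl⟩ := n.even_or_odd'
      · exact ⟨i, by simp only [mem_Icc]; omega, (hw_even i).symm⟩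
      · simp only [hw_odd]
        split_ifs
        exacts [⟨i, by simp only [mem_Icc]; omega, rfl⟩,
          ⟨i + 1, by simp only [mem_Icc]; omega, rfl⟩]
    · rintro ⟨i, hi, rfl⟩
      exact ⟨⟨2 * i, by simp only [mem_Icc] at hi ⊢; omega⟩, hw_even i⟩

lemma isCOTSPath_of_isChain {l : List Y} (hl : l ≠ []) (hc : l.IsChain (SymmGen (· ⤳ ·))) :
    IsCOTSPath ‹_› {y | y ∈ l} := by
  let s : ℤ → Y := fun i => l.getD i.toNat (l.head hl)
  have hs (i : ℕ) (h : i < l.length) : s i = l[i] := by simp [s, h]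
  convert isCOTSPath_image_Icc s (N := l.length - 1) (by simp [Nat.one_le_iff_ne_zero, hl]) ?_
  · ext y
    simp only [mem_ofPred_eq, mem_image, mem_Icc, List.mem_iff_getElem]
    constructor
    · rintro ⟨i, hi, rfl⟩
      exact ⟨i, by omega, hs i hi⟩
    · rintro ⟨i, ⟨hi₀, hi⟩, rfl⟩
      lift i to ℕ using hi₀
      exact ⟨i, by omega, (hs i (by omega)).symm⟩
  · intro i hi
    simp only [mem_Ico] at hi
    lift i to ℕ using hi.1
    rw [show ((i : ℤ) + 1) = ((i + 1 : ℕ) : ℤ) by push_cast; ring, hs i (by omega),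
      hs (i + 1) (by omega)]
    exact List.isChain_iff_getElem.mp hc i (by omega)

end Chains

lemma reflTransGen_symmGen_specializes {C : Type*} [TopologicalSpace C] [AlexandrovDiscrete C]
    [PreconnectedSpace C] (x y : C) : ReflTransGen (SymmGen (· ⤳ ·)) x y := by
  refine PreconnectedSpace.induction₂' _ (fun x => ?_) ⟨fun _ _ _ => ReflTransGen.trans⟩ x y
  filter_upwards [nhdsKer_singleton_subset_iff_mem_nhds.mp subset_rfl] with y hy
  have hyx : y ⤳ x := mem_nhdsKer_singleton.mp hy
  exact ⟨.single (.of_rel_symm hyx), .single (.of_rel hyx)⟩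

lemma exists_isChain_symmGen_specializes_forall_mem (C : Type*) [TopologicalSpace C] [Finite C]
    [PreconnectedSpace C] [Nonempty C] :
    ∃ l : List C, l ≠ [] ∧ l.IsChain (SymmGen (· ⤳ ·)) ∧ ∀ c, c ∈ l := by
  suffices h : ∀ L : List C, ∃ l : List C, l ≠ [] ∧ l.IsChain (SymmGen (· ⤳ ·)) ∧ ∀ c ∈ L, c ∈ l by
    obtain ⟨L, -, hL⟩ := Finite.exists_univ_list C
    obtain ⟨l, hl, hchain, hmem⟩ := h L
    exact ⟨l, hl, hchain, fun c => hmem c (hL c)⟩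
  intro L
  induction L with
  | nil => exact ⟨[Classical.arbitrary C], by simp, .singleton _, by simp⟩
  | cons c L ih =>
    obtain ⟨l, hl, hchain, hmem⟩ := ih
    obtain ⟨m, hm, hlast⟩ := List.exists_isChain_cons_of_relationReflTransGen
      (reflTransGen_symmGen_specializes c (l.head hl))
    refine ⟨(c :: m) ++ l, by simp, List.isChain_append.mpr ⟨hm, hchain, ?_⟩, ?_⟩
    · intro x hx y hy
      rw [List.getLast?_eq_some_getLast (List.cons_ne_nil _ _), hlast, Option.mem_some_iff] at hx
      rw [List.head?_eq_some_head hl, Option.mem_some_iff] at hy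
      exact hx ▸ hy ▸ .of_rel specializes_rfl
    · simp only [List.mem_cons, List.cons_append, List.mem_append]
      rintro d (rfl | hd)
      · exact .inl rfl
      · exact .inr (.inr (hmem d hd))

lemma isCOTSPath_of_finite_of_isConnected {Y : Type*} [TopologicalSpace Y] {S : Set Y}
    (hfin : S.Finite) (hconn : IsConnected S) : IsCOTSPath ‹_› S := by
  have : Finite S := hfin.to_subtype
  have : ConnectedSpace S := isConnected_iff_connectedSpace.mp hconn
  obtain ⟨l, hl, hchain, hmem⟩ := exists_isChain_symmGen_specializes_forall_mem S
  convert isCOTSPath_of_isChain (l := l.map (↑)) (mt List.map_eq_nil_iff.mp hl)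
    (List.isChain_map _ |>.mpr <| hchain.imp fun _ _ =>
      Or.imp (·.map continuous_subtype_val) (·.map continuous_subtype_val))
  ext y
  simp only [mem_ofPred_eq, List.mem_map, Subtype.exists, exists_and_right, exists_eq_right]
  exact ⟨fun hy => ⟨hy, hmem ⟨y, hy⟩⟩, fun ⟨hy, _⟩ => hy⟩

/-- The union of two COTS-paths sharing an endpoint is a COTS-path. -/
theorem stmt4 {Y : Type*} (tY : TopologicalSpace Y) (α β : Set Y) (a b c : Y)
    (hα : IsCOTSPathFromTo tY α a b) (hβ : IsCOTSPathFromTo tY β b c) :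
    IsCOTSPath tY (α ∪ β) := by
  obtain ⟨C₁, t₁, _, ⟨_, -⟩, f₁, hf₁, rfl, -, c₁, -, -, -, hb₁⟩ := hα
  obtain ⟨C₂, t₂, _, ⟨_, -⟩, f₂, hf₂, rfl, c₂, -, -, -, hb₂, -⟩ := hβ
  exact isCOTSPath_of_finite_of_isConnected ((finite_range f₁).union (finite_range f₂))
    (.union ⟨b, ⟨c₁, hb₁⟩, ⟨c₂, hb₂⟩⟩ (isConnected_range hf₁) (isConnected_range hf₂))
end

section
/- Every COTS-path in a finite topological space contains, as a subset, a COTS-arc with the same start and end points, and this arc has cardinality at most that of the path. -/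
open Set

/-!
In a finite space two points lie in the same connected component exactly when they are joined
by a chain of points, each comparable with the next in the specialization order. The image `P`
of a COTS-path is connected, so its endpoints are joined by such a chain inside `P`. A shortest
chain repeats no point and has no comparabilities between non-consecutive points, so with the
subspace topology it is a finite space whose specialization graph is a path graph, and such a
space is a COTS whose endpoints are the ends of the chain.
-/

open SimpleGraph Topology

theorem Set.exists_lt_lt_of_ncard_eq_three {α : Type*} [LinearOrder α] {s : Set α}
    (hs : s.ncard = 3) : ∃ p ∈ s, ∃ q ∈ s, ∃ r ∈ s, p < q ∧ q < r := by
  have hfin : s.Finite := Set.finite_of_ncard_ne_zero (by omega)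
  have hcard : hfin.toFinset.card = 3 := by rwa [← Set.ncard_eq_toFinset_card s hfin]
  set e := hfin.toFinset.orderEmbOfFin hcard
  have he : ∀ i, e i ∈ s := fun i => hfin.mem_toFinset.1 (Finset.orderEmbOfFin_mem _ _ i)
  exact ⟨e 0, he 0, e 1, he 1, e 2, he 2, e.strictMono (by decide), e.strictMono (by decide)⟩

namespace SimpleGraph.Walk

variable {V : Type*} {G : SimpleGraph V} {u v : V}

theorem eq_add_one_of_adj_getVert (p : G.Walk u v) (hp : p.length = G.dist u v) {i j : ℕ}
    (hij : i < j) (hj : j ≤ p.length) (hadj : G.Adj (p.getVert i) (p.getVert j)) :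
    j = i + 1 := by
  -- shortcut `p` through the edge `hadj`
  have := G.dist_le ((p.take i).append (.cons hadj (p.drop j)))
  simp only [length_append, take_length, length_cons, drop_length] at this
  omega

theorem comap_getVert_eq_pathGraph (p : G.Walk u v) (hp : p.length = G.dist u v) :
    G.comap (fun i : Fin (p.length + 1) => p.getVert i) = pathGraph (p.length + 1) := by
  ext i j
  rw [comap_adj, pathGraph_adj]
  constructor
  · intro hadj
    rcases lt_trichotomy i.val j.val with hij | hij | hij
    · exact Or.inl (p.eq_add_one_of_adj_getVert hp hij (by omega) hadj).symm
    · exact absurd (congrArg p.getVert hij) hadj.ne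
    · exact Or.inr (p.eq_add_one_of_adj_getVert hp hij (by omega) hadj.symm).symm
  · rintro (hij | hij)
    · rw [← hij]; exact p.adj_getVert_succ (by omega)
    · rw [← hij]; exact (p.adj_getVert_succ (by omega)).symm

end SimpleGraph.Walk

section SpecializationGraph

variable {X : Type*}

theorem minOpenNhd_eq_nhdsKer [t : TopologicalSpace X] (x : X) :
    minOpenNhd t x = nhdsKer {x} := by
  simp only [minOpenNhd, nhdsKer_def, singleton_subset_iff]
  rfl

theorem specLE_iff_specializes [t : TopologicalSpace X] {x y : X} : specLE t x y ↔ x ⤳ y := by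
  rw [specializes_iff_nhdsKer_subset, specLE, minOpenNhd_eq_nhdsKer, minOpenNhd_eq_nhdsKer]

def specGraph (t : TopologicalSpace X) : SimpleGraph X where
  Adj := Adjacent t
  symm := ⟨fun _ _ h => ⟨h.1.symm, h.2.symm⟩⟩
  loopless := ⟨fun _ h => h.1 rfl⟩

variable [t : TopologicalSpace X]

theorem specGraph_adj {x y : X} : (specGraph t).Adj x y ↔ x ≠ y ∧ (x ⤳ y ∨ y ⤳ x) := by
  simp only [specGraph, Adjacent, specLE_iff_specializes]

theorem Topology.IsEmbedding.specGraph_eq_comap {Z : Type*} [tZ : TopologicalSpace Z]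
    {f : Z → X} (hf : IsEmbedding f) : specGraph tZ = (specGraph t).comap f := by
  ext z z'
  simp only [comap_adj, specGraph_adj, hf.injective.ne_iff, hf.isInducing.specializes_iff]

theorem connectedComponent_eq_of_specializes {x y : X} (h : x ⤳ y) :
    connectedComponent x = connectedComponent y :=
  connectedComponent_eq <| isPreconnected_singleton.closure.subset_connectedComponent
    (subset_closure rfl) (specializes_iff_mem_closure.1 h)

theorem connectedComponent_eq_of_reachable {x y : X} (h : (specGraph t).Reachable x y) :
    connectedComponent x = connectedComponent y := by
  obtain ⟨p⟩ := h
  induction p with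
  | nil => rfl
  | cons hadj _ ih =>
    refine Eq.trans ?_ ih
    exact (specGraph_adj.1 hadj).2.elim connectedComponent_eq_of_specializes
      fun h => (connectedComponent_eq_of_specializes h).symm

variable [AlexandrovDiscrete X]

theorem isClopen_of_forall_adj {s : Set X}
    (hs : ∀ x y, (specGraph t).Adj x y → x ∈ s → y ∈ s) : IsClopen s := by
  refine ⟨isOpen_compl_iff.1 ?_, ?_⟩ <;> rw [isOpen_iff_forall_specializes]
  · intro x y hxy hy hx
    obtain rfl | hne := eq_or_ne x y
    · exact hy hx
    · exact hy (hs x y (specGraph_adj.2 ⟨hne, .inl hxy⟩) hx)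
  · intro x y hxy hy
    obtain rfl | hne := eq_or_ne x y
    · exact hy
    · exact hs y x (specGraph_adj.2 ⟨hne.symm, .inr hxy⟩) hy

theorem connectedComponent_eq_setOf_reachable (x : X) :
    connectedComponent x = {y | (specGraph t).Reachable x y} := by
  refine subset_antisymm ?_ fun y hy => ?_
  · exact (isClopen_of_forall_adj fun _ _ h hy => hy.trans h.reachable).connectedComponent_subset
      Reachable.rfl
  · rw [connectedComponent_eq_of_reachable hy]
    exact mem_connectedComponent

theorem connectedSpace_iff_connected_specGraph : ConnectedSpace X ↔ (specGraph t).Connected := by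
  simp only [connectedSpace_iff_connectedComponent, connected_iff_exists_forall_reachable,
    connectedComponent_eq_setOf_reachable, Set.eq_univ_iff_forall, Set.mem_ofPred_eq]

theorem connectedComponentIn_subset_of_forall_adj {F S : Set X} (hSF : S ⊆ F)
    (hS : ∀ x ∈ S, ∀ y ∈ F, (specGraph t).Adj x y → y ∈ S) {x : X} (hx : x ∈ S) :
    connectedComponentIn F x ⊆ S := by
  rw [connectedComponentIn_eq_image (hSF hx)]
  rintro _ ⟨z, hz, rfl⟩
  have hclopen : IsClopen (Subtype.val ⁻¹' S : Set F) :=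
    isClopen_of_forall_adj fun u v huv hu =>
      hS u hu v v.2 (by rwa [IsEmbedding.subtypeVal.specGraph_eq_comap] at huv)
  exact hclopen.connectedComponent_subset hx hz

end SpecializationGraph

section PathGraph

variable {n : ℕ} {t : TopologicalSpace (Fin (n + 1))}

theorem isCOTS_of_specGraph_eq_pathGraph (h : specGraph t = pathGraph (n + 1)) :
    IsCOTS t := by
  refine ⟨connectedSpace_iff_connected_specGraph.2 (h ▸ pathGraph_connected n),
    fun T hT => ?_⟩
  obtain ⟨p, hp, q, hq, r, hr, hpq, hqr⟩ := Set.exists_lt_lt_of_ncard_eq_three hT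
  refine ⟨q, hq, p, ⟨hp, hpq.ne⟩, r, ⟨hr, hqr.ne'⟩, fun heq => ?_⟩
  have hsub : connectedComponentIn {q}ᶜ p ⊆ Iio q := by
    refine connectedComponentIn_subset_of_forall_adj (fun z hz => ne_of_lt hz) ?_ hpq
    intro x hx y hy hxy
    rw [h, pathGraph_adj] at hxy
    have := Fin.val_ne_of_ne hy
    change x < q at hx
    change y < q
    rw [Fin.lt_def] at hx ⊢
    omega
  have hr' : r ∈ connectedComponentIn {q}ᶜ p := heq ▸ mem_connectedComponentIn hqr.ne'
  exact (hsub hr').not_gt hqr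

theorem isEndpoint_of_specGraph_eq_pathGraph (h : specGraph t = pathGraph (n + 1))
    {i : Fin (n + 1)} (hi : i.val = 0 ∨ i.val = n) : IsEndpoint t i := by
  refine (ncard_le_one (toFinite _)).2 fun u hu v hv => ?_
  change (specGraph t).Adj i u at hu
  change (specGraph t).Adj i v at hv
  rw [h, pathGraph_adj] at hu hv
  have := u.isLt
  have := v.isLt
  ext
  omega

end PathGraph

theorem isCOTSArcFromTo_support_of_length_eq_dist {Y : Type*} [tY : TopologicalSpace Y]
    {a b : Y} (p : (specGraph tY).Walk a b) (hp : p.length = (specGraph tY).dist a b) :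
    IsCOTSArcFromTo tY {y | y ∈ p.support} a b := by
  set g : Fin (p.length + 1) → Y := fun i => p.getVert i
  have hinj : g.Injective := fun i j hij =>
    Fin.ext <| (p.isPath_of_length_eq_dist hp).getVert_injOn (by simp; omega) (by simp; omega) hij
  let tC : TopologicalSpace (Fin (p.length + 1)) := tY.induced g
  have hemb : IsEmbedding g := ⟨⟨rfl⟩, hinj⟩
  have hpath : specGraph tC = pathGraph (p.length + 1) := by
    rw [hemb.specGraph_eq_comap, p.comap_getVert_eq_pathGraph hp]
  refine ⟨_, tC, inferInstance, isCOTS_of_specGraph_eq_pathGraph hpath, g, hemb, ?_,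
    0, Fin.last _, isEndpoint_of_specGraph_eq_pathGraph hpath (.inl rfl),
    isEndpoint_of_specGraph_eq_pathGraph hpath (.inr rfl), p.getVert_zero, p.getVert_length⟩
  ext y
  simp only [mem_range, mem_ofPred_eq, Walk.mem_support_iff_exists_getVert]
  constructor
  · rintro ⟨i, rfl⟩
    exact ⟨i, rfl, by omega⟩
  · rintro ⟨i, rfl, hi⟩
    exact ⟨⟨i, by omega⟩, rfl⟩

theorem IsCOTSArcFromTo.image {Z Y : Type*} [tZ : TopologicalSpace Z] [tY : TopologicalSpace Y]
    {A : Set Z} {a b : Z} (hA : IsCOTSArcFromTo tZ A a b) {e : Z → Y} (he : IsEmbedding e) :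
    IsCOTSArcFromTo tY (e '' A) (e a) (e b) := by
  obtain ⟨C, tC, hC, hcots, f, hf, rfl, c₀, c₁, h₀, h₁, rfl, rfl⟩ := hA
  exact ⟨C, tC, hC, hcots, e ∘ f, he.comp hf, range_comp e f,
    c₀, c₁, h₀, h₁, rfl, rfl⟩

theorem stmt5_general {Y : Type*} [tY : TopologicalSpace Y] (P : Set Y) (a b : Y)
    (h : IsCOTSPathFromTo tY P a b) :
    ∃ A ⊆ P, IsCOTSArcFromTo tY A a b ∧ A.ncard ≤ P.ncard := by
  obtain ⟨C, tC, hC, ⟨hconn, -⟩, f, hf, rfl, c₀, c₁, -, -, rfl, rfl⟩ := h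
  have : ConnectedSpace (range f) := isConnected_iff_connectedSpace.1 (isConnected_range hf)
  obtain ⟨p, hp⟩ := (connectedSpace_iff_connected_specGraph.1 this).exists_walk_length_eq_dist
    (rangeFactorization f c₀) (rangeFactorization f c₁)
  have hsub : Subtype.val '' {y | y ∈ p.support} ⊆ range f := Subtype.coe_image_subset _ _
  exact ⟨_, hsub, (isCOTSArcFromTo_support_of_length_eq_dist p hp).image IsEmbedding.subtypeVal,
    ncard_le_ncard hsub (finite_range f)⟩

/-- Every COTS-path in a finite space contains a COTS-arc with the same start and end
points, of cardinality at most that of the path. -/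
theorem stmt5 {Y : Type*} [tY : TopologicalSpace Y] [Finite Y] (P : Set Y) (a b : Y)
    (h : IsCOTSPathFromTo tY P a b) :
    ∃ A ⊆ P, IsCOTSArcFromTo tY A a b ∧ A.ncard ≤ P.ncard :=
  stmt5_general (tY := tY) P a b h
end

section
/- In the Khalimsky plane, if p is a pure point with integer coordinates (i,j) and q = (k,ℓ) satisfies d(p,q) ≤ n for the COTS-distance, then |k - i| ≤ n and |ℓ - j| ≤ n. -/
open Set

lemma khal_isOpen {S : Set ℤ} (h : ∀ e ∈ S, Even e → e - 1 ∈ S ∧ e + 1 ∈ S) :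
    khal.IsOpen S := by
  have hS : S = ⋃₀ {s : Set ℤ |
      (∃ n : ℤ, (Odd n ∧ s = {n}) ∨ (Even n ∧ s = {n - 1, n, n + 1})) ∧ s ⊆ S} := by
    ext x
    constructor
    · intro hx
      rcases Int.even_or_odd x with he | ho
      · refine ⟨{x - 1, x, x + 1}, ⟨⟨x, Or.inr ⟨he, rfl⟩⟩, ?_⟩, by simp⟩
        rintro y (rfl | rfl | rfl)
        · exact (h x hx he).1
        · exact hx
        · exact (h x hx he).2
      · exact ⟨{x}, ⟨⟨x, Or.inl ⟨ho, rfl⟩⟩, by simpa using hx⟩, rfl⟩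
    · rintro ⟨s, ⟨_, hsub⟩, hxs⟩
      exact hsub hxs
  rw [hS]
  exact TopologicalSpace.GenerateOpen.sUnion _
    (fun s hs => TopologicalSpace.GenerateOpen.basic s hs.1)

lemma khal_interval {s : Set ℤ} (hs : @IsPreconnected ℤ khal s) {a b c : ℤ}
    (ha : a ∈ s) (hb : b ∈ s) (hac : a ≤ c) (hcb : c ≤ b) : c ∈ s := by
  by_contra hc
  rcases Int.even_or_odd c with he | ho
  · have hU : khal.IsOpen (Iic (c - 1)) := by
      apply khal_isOpen
      intro e hes hee
      simp only [mem_Iic] at *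
      refine ⟨by omega, ?_⟩
      have : e ≠ c - 1 := by rintro rfl; exact (Int.even_add_one.mp (by simpa using he)) hee
      omega
    have hV : khal.IsOpen (Ici (c + 1)) := by
      apply khal_isOpen
      intro e hes hee
      simp only [mem_Ici] at *
      refine ⟨?_, by omega⟩
      have : e ≠ c + 1 := by rintro rfl; exact (Int.even_add_one.mp (by simpa using hee)) he
      omega
    obtain ⟨x, hx⟩ := hs (Iic (c - 1)) (Ici (c + 1)) hU hV
      (fun x hx => by
        have : x ≠ c := fun h => hc (h ▸ hx)
        simp only [mem_union, mem_Iic, mem_Ici]; omega)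
      ⟨a, ha, by have : a ≠ c := fun h => hc (h ▸ ha); simp only [mem_Iic]; omega⟩
      ⟨b, hb, by have : b ≠ c := fun h => hc (h ▸ hb); simp only [mem_Ici]; omega⟩
    simp only [mem_inter_iff, mem_Iic, mem_Ici] at hx
    omega
  · have hU : khal.IsOpen (Iic c) := by
      apply khal_isOpen
      intro e hes hee
      simp only [mem_Iic] at *
      have : e ≠ c := by rintro rfl; exact (Int.not_even_iff_odd.mpr ho) hee
      omega
    have hV : khal.IsOpen (Ici c) := by
      apply khal_isOpen
      intro e hes hee
      simp only [mem_Ici] at *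
      have : e ≠ c := by rintro rfl; exact (Int.not_even_iff_odd.mpr ho) hee
      omega
    obtain ⟨x, hx⟩ := hs (Iic c) (Ici c) hU hV
      (fun x _ => by simp only [mem_union, mem_Iic, mem_Ici]; omega)
      ⟨a, ha, hac⟩ ⟨b, hb, hcb⟩
    simp only [mem_inter_iff, mem_Iic, mem_Ici] at hx
    have : x = c := le_antisymm hx.2.1 hx.2.2
    exact hc (this ▸ hx.1)

lemma coord_bound {A : Set (ℤ × ℤ)} (hA : @IsPreconnected _ khalPlane A) (hfin : A.Finite)
    {p q : ℤ × ℤ} (hp : p ∈ A) (hq : q ∈ A) :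
    |q.1 - p.1| + 1 ≤ (A.ncard : ℤ) ∧ |q.2 - p.2| + 1 ≤ (A.ncard : ℤ) := by
  have key : ∀ (g : ℤ × ℤ → ℤ), @Continuous _ _ khalPlane khal g →
      |g q - g p| + 1 ≤ (A.ncard : ℤ) := by
    intro g hg
    have ht : @IsPreconnected ℤ khal (g '' A) :=
      @IsPreconnected.image (ℤ × ℤ) ℤ khalPlane khal A hA g
        (@Continuous.continuousOn _ _ khalPlane khal _ _ hg)
    have hsub : Set.Icc (min (g p) (g q)) (max (g p) (g q)) ⊆ g '' A := by
      intro c hc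
      simp only [mem_Icc] at hc
      rcases le_total (g p) (g q) with hle | hle
      · exact khal_interval ht ⟨p, hp, rfl⟩ ⟨q, hq, rfl⟩ (by omega) (by omega)
      · exact khal_interval ht ⟨q, hq, rfl⟩ ⟨p, hp, rfl⟩ (by omega) (by omega)
    have h1 : (Set.Icc (min (g p) (g q)) (max (g p) (g q))).ncard ≤ (g '' A).ncard :=
      Set.ncard_le_ncard hsub (hfin.image g)
    have h2 : (g '' A).ncard ≤ A.ncard := Set.ncard_image_le hfin
    have h3 : (Set.Icc (min (g p) (g q)) (max (g p) (g q))).ncard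
        = (max (g p) (g q) + 1 - min (g p) (g q)).toNat := by
      rw [← Finset.coe_Icc, Set.ncard_coe_finset, Int.card_Icc]
    have h4 : max (g p) (g q) - min (g p) (g q) = |g q - g p| := by
      rcases le_total (g p) (g q) with hle | hle <;>
        simp [abs_of_nonneg, abs_of_nonpos, hle] <;> omega
    have h5 := h1.trans h2
    rw [h3] at h5
    omega
  exact ⟨key Prod.fst (@continuous_fst ℤ ℤ khal khal),
    key Prod.snd (@continuous_snd ℤ ℤ khal khal)⟩

/-- In the Khalimsky plane, points within COTS-distance `n` of a pure point differ by
at most `n` in each coordinate. -/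
theorem stmt9 (p q : ℤ × ℤ) (hp : IsPurePt p) (n : ℕ)
    (h : cotsDist khalPlane p q ≤ (n : ℕ∞)) :
    |q.1 - p.1| ≤ (n : ℤ) ∧ |q.2 - p.2| ≤ (n : ℤ) := by
  rw [cotsDist] at h
  have hex : ∃ m ∈ {m : ℕ∞ | ∃ A : Set (ℤ × ℤ),
      IsCOTSArcFromTo khalPlane A p q ∧ (A.ncard : ℕ∞) = m + 1}, m ≤ (n : ℕ∞) := by
    by_contra hcon
    push_neg at hcon
    have h1 : (n : ℕ∞) + 1 ≤ sInf {m : ℕ∞ | ∃ A : Set (ℤ × ℤ),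
        IsCOTSArcFromTo khalPlane A p q ∧ (A.ncard : ℕ∞) = m + 1} :=
      le_sInf fun m hm => (ENat.add_one_le_iff (by simp)).mpr (hcon m hm)
    have h2 := h1.trans h
    norm_cast at h2
    omega
  obtain ⟨m, hmS, hmn⟩ := hex
  lift m to ℕ using (lt_of_le_of_lt hmn (ENat.coe_lt_top n)).ne
  obtain ⟨A, harc, hcard⟩ := hmS
  obtain ⟨C, tC, hCfin, hCots, f, hemb, hrange, c₀, c₁, _, _, hf₀, hf₁⟩ := harc
  have : Finite C := hCfin
  have hconn : @ConnectedSpace C tC := hCots.1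
  have hpreC : @PreconnectedSpace C tC := @ConnectedSpace.toPreconnectedSpace C tC hconn
  have hpre : @IsPreconnected _ khalPlane (Set.range f) :=
    @isPreconnected_range C (ℤ × ℤ) tC khalPlane hpreC f (by
      obtain ⟨⟨heq⟩, -⟩ := hemb
      rw [heq]
      exact @continuous_induced_dom C (ℤ × ℤ) f khalPlane)
  have hAfin : A.Finite := hrange ▸ Set.finite_range f
  have hpA : p ∈ A := hrange ▸ ⟨c₀, hf₀⟩
  have hqA : q ∈ A := hrange ▸ ⟨c₁, hf₁⟩
  have hb := coord_bound (hrange ▸ hpre) hAfin hpA hqA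
  have hAcard : A.ncard = m + 1 := by exact_mod_cast hcard
  have hmn' : m ≤ n := by exact_mod_cast hmn
  rw [hAcard] at hb
  constructor
  · have hb1 := hb.1; push_cast at hb1; omega
  · have hb2 := hb.2; push_cast at hb2; omega
end
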